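/- arXiv:2107.04574 — 6 statements merged into one kernel-verified Lean document; each statement's English description precedes it below -/
import Mathlib

section
/- The labeled convolution of the functions n ↦ C(n,a₁)·b₁^(n−a₁) and n ↦ C(n,a₂)·b₂^(n−a₂) equals n ↦ C(a₁+a₂,a₁)·C(n,a₁+a₂)·(b₁+b₂)^(n−(a₁+a₂)). -/
/-!
The sequence `n ↦ C(n,a)·b^(n-a)` has exponential generating function `xᵃ/a! · e^{bx}`, so the
identity is the product of two such series. Directly: in the convolution sum only the pairs
`(a₁ + p, a₂ + q)` with `p + q = n - (a₁ + a₂)` contribute, the product of binomial coefficients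
regroups as `C(a₁+a₂, a₁)·C(n, a₁+a₂)·C(p+q, p)`, and the remaining sum is the binomial expansion
of `(b₁ + b₂)^(p+q)`.
-/

open Finset Nat

-- Both sides are the multinomial coefficient of `(a₁, p, a₂, q)`.
theorem Nat.choose_add_mul_choose_mul_choose (a₁ a₂ p q : ℕ) :
    (a₁ + a₂ + (p + q)).choose (a₁ + p) * (a₁ + p).choose a₁ * (a₂ + q).choose a₂ =
      (a₁ + a₂).choose a₁ * (a₁ + a₂ + (p + q)).choose (a₁ + a₂) * (p + q).choose p := by
  have hfac (i j : ℕ) : (i + j).choose i * i ! * j ! = (i + j)! := by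
    rw [choose_symm_add, add_choose_mul_factorial_mul_factorial]
  refine Nat.eq_of_mul_eq_mul_right (m := a₁ ! * p ! * (a₂ ! * q !)) (by positivity) ?_
  calc
    _ = (a₁ + p + (a₂ + q)).choose (a₁ + p) * ((a₁ + p).choose a₁ * a₁ ! * p !) *
          ((a₂ + q).choose a₂ * a₂ ! * q !) := by
      rw [add_add_add_comm]; ring
    _ = (a₁ + a₂ + (p + q))! := by rw [hfac, hfac, hfac, add_add_add_comm]
    _ = (a₁ + a₂ + (p + q)).choose (a₁ + a₂) * ((a₁ + a₂).choose a₁ * a₁ ! * a₂ !) *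
          ((p + q).choose p * p ! * q !) := by rw [hfac, hfac, hfac]
    _ = _ := by ring

theorem Finset.Nat.sum_antidiagonal_add_add_of_eq_zero {M : Type*} [AddCommMonoid M]
    {a₁ a₂ : ℕ} (f : ℕ → ℕ → M) (hf : ∀ i j, i < a₁ ∨ j < a₂ → f i j = 0) (m : ℕ) :
    ∑ ij ∈ antidiagonal (a₁ + a₂ + m), f ij.1 ij.2 =
      ∑ pq ∈ antidiagonal m, f (a₁ + pq.1) (a₂ + pq.2) := by
  symm
  refine sum_bij_ne_zero (fun pq _ _ ↦ (a₁ + pq.1, a₂ + pq.2)) ?_ ?_ ?_ (fun _ _ _ ↦ rfl)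
  · intro pq hpq _
    rw [HasAntidiagonal.mem_antidiagonal] at hpq ⊢
    omega
  · intro pq _ _ pq' _ _ h
    simp only [Prod.mk.injEq, Nat.add_left_cancel_iff] at h
    exact Prod.ext h.1 h.2
  · rintro ⟨i, j⟩ hij hne
    have hi : a₁ ≤ i := by by_contra! h; exact hne (hf i j (Or.inl h))
    have hj : a₂ ≤ j := by by_contra! h; exact hne (hf i j (Or.inr h))
    obtain ⟨p, rfl⟩ := exists_add_of_le hi
    obtain ⟨q, rfl⟩ := exists_add_of_le hj
    rw [HasAntidiagonal.mem_antidiagonal] at hij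
    exact ⟨(p, q), by rw [HasAntidiagonal.mem_antidiagonal]; omega, hne, rfl⟩

section LabeledConvolution

variable {R : Type*} [CommSemiring R]

def labeledConv (f g : ℕ → R) (n : ℕ) : R :=
  ∑ ij ∈ antidiagonal n, (n.choose ij.1 : R) * f ij.1 * g ij.2

theorem labeledConv_eq_sum_range (f g : ℕ → R) (n : ℕ) :
    labeledConv f g n = ∑ i ∈ range (n + 1), (n.choose i : R) * f i * g (n - i) :=
  Finset.Nat.sum_antidiagonal_eq_sum_range_succ (fun i j ↦ (n.choose i : R) * f i * g j) n

def binomialExponential (a : ℕ) (b : R) (n : ℕ) : R :=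
  (n.choose a : R) * b ^ (n - a)

theorem binomialExponential_of_lt {a n : ℕ} (b : R) (h : n < a) :
    binomialExponential a b n = 0 := by
  rw [binomialExponential, choose_eq_zero_of_lt h, cast_zero, zero_mul]

theorem binomialExponential_add_left (a p : ℕ) (b : R) :
    binomialExponential a b (a + p) = ((a + p).choose a : R) * b ^ p := by
  rw [binomialExponential, Nat.add_sub_cancel_left]

theorem labeledConv_binomialExponential (a₁ a₂ : ℕ) (b₁ b₂ : R) :
    labeledConv (binomialExponential a₁ b₁) (binomialExponential a₂ b₂) =
      ((a₁ + a₂).choose a₁ : R) • binomialExponential (a₁ + a₂) (b₁ + b₂) := by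
  ext n
  have hvanish : ∀ i j, i < a₁ ∨ j < a₂ →
      (n.choose i : R) * binomialExponential a₁ b₁ i * binomialExponential a₂ b₂ j = 0 := by
    rintro i j (h | h) <;> simp [binomialExponential_of_lt _ h]
  rcases lt_or_ge n (a₁ + a₂) with hn | hn
  · rw [Pi.smul_apply, binomialExponential_of_lt _ hn, smul_zero]
    refine sum_eq_zero fun ij hij ↦ hvanish _ _ ?_
    rw [HasAntidiagonal.mem_antidiagonal] at hij
    omega
  obtain ⟨m, rfl⟩ := exists_add_of_le hn
  rw [labeledConv, Finset.Nat.sum_antidiagonal_add_add_of_eq_zero _ hvanish, Pi.smul_apply,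
    binomialExponential_add_left, (Commute.all b₁ b₂).add_pow', mul_sum, smul_sum]
  refine sum_congr rfl fun ⟨p, q⟩ hpq ↦ ?_
  rw [HasAntidiagonal.mem_antidiagonal] at hpq
  subst hpq
  calc
    _ = (((a₁ + a₂ + (p + q)).choose (a₁ + p) * (a₁ + p).choose a₁ * (a₂ + q).choose a₂ : ℕ)
          : R) * (b₁ ^ p * b₂ ^ q) := by
      simp only [binomialExponential_add_left]; push_cast; ring
    _ = _ := by
      rw [choose_add_mul_choose_mul_choose, nsmul_eq_mul, smul_eq_mul]; push_cast; ring

end LabeledConvolution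

/-- The labeled convolution of `n ↦ C(n,a₁)·b₁^(n−a₁)` and
`n ↦ C(n,a₂)·b₂^(n−a₂)` equals `n ↦ C(a₁+a₂,a₁)·C(n,a₁+a₂)·(b₁+b₂)^(n−(a₁+a₂))`. -/
theorem labeled_convolution_binomial_exponential (a₁ a₂ b₁ b₂ : ℕ) (n : ℕ) :
    ∑ i ∈ Finset.range (n + 1),
        (n.choose i : ℤ) * ((i.choose a₁ : ℤ) * (b₁ : ℤ) ^ (i - a₁)) *
          (((n - i).choose a₂ : ℤ) * (b₂ : ℤ) ^ ((n - i) - a₂)) =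
      ((a₁ + a₂).choose a₁ : ℤ) * (n.choose (a₁ + a₂) : ℤ) *
        ((b₁ : ℤ) + (b₂ : ℤ)) ^ (n - (a₁ + a₂)) := by
  have h := congrFun (labeledConv_binomialExponential a₁ a₂ (b₁ : ℤ) b₂) n
  rw [labeledConv_eq_sum_range] at h
  simpa only [binomialExponential, Pi.smul_apply, smul_eq_mul, mul_assoc] using h
end

section
/- If f and g are ℕ → ℤ functions each expressible as a finite integer linear combination of terms n ↦ C(n,a)·b^(n−a) with a,b nonnegative integers, then their labeled convolution (f|g)(n) = ∑_{i+j=n} C(n,i)·f(i)·g(j) is also such a finite integer linear combination. -/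
open Finset

lemma choose_trinom (a c j k : ℕ) :
    ((a+c+(j+k)).choose (a+j)) * ((a+j).choose a) * ((c+k).choose c)
      = ((a+c).choose a) * ((a+c+(j+k)).choose (a+c)) * ((j+k).choose j) := by
  have h1 : a + j ≤ a + c + (j + k) := by omega
  have h2 : a ≤ a + j := by omega
  have h3 : c ≤ c + k := by omega
  have h4 : a ≤ a + c := by omega
  have h5 : a + c ≤ a + c + (j + k) := by omega
  have h6 : j ≤ j + k := by omega
  have key : (((a+c+(j+k)).choose (a+j) * ((a+j).choose a) * ((c+k).choose c) : ℕ) : ℚ)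
      = (((a+c).choose a * ((a+c+(j+k)).choose (a+c)) * ((j+k).choose j) : ℕ) : ℚ) := by
    push_cast
    rw [Nat.cast_choose ℚ h1, Nat.cast_choose ℚ h2, Nat.cast_choose ℚ h3,
      Nat.cast_choose ℚ h4, Nat.cast_choose ℚ h5, Nat.cast_choose ℚ h6,
      show a+c+(j+k) - (a+j) = c+k by omega, show a+j-a = j by omega,
      show c+k-c = k by omega, show a+c-a = c by omega,
      show a+c+(j+k) - (a+c) = j+k by omega, show j+k-j = k by omega]
    have f1 : ((a+j).factorial : ℚ) ≠ 0 := by positivity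
    have f2 : ((c+k).factorial : ℚ) ≠ 0 := by positivity
    have f3 : ((a).factorial : ℚ) ≠ 0 := by positivity
    have f4 : ((j).factorial : ℚ) ≠ 0 := by positivity
    have f5 : ((c).factorial : ℚ) ≠ 0 := by positivity
    have f6 : ((k).factorial : ℚ) ≠ 0 := by positivity
    have f7 : ((a+c).factorial : ℚ) ≠ 0 := by positivity
    have f8 : ((j+k).factorial : ℚ) ≠ 0 := by positivity
    field_simp
  exact_mod_cast key

lemma key_conv (n a c : ℕ) (b d : ℤ) :
    ∑ i ∈ range (n+1),
      (n.choose i : ℤ) * ((i.choose a : ℤ) * b ^ (i - a)) * (((n-i).choose c : ℤ) * d ^ (n - i - c))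
      = ((a+c).choose a : ℤ) * (n.choose (a+c) : ℤ) * (b + d) ^ (n - (a+c)) := by
  rcases lt_or_ge n (a+c) with hn | hn
  · have hz : ∑ i ∈ range (n+1),
        (n.choose i : ℤ) * ((i.choose a : ℤ) * b ^ (i - a)) * (((n-i).choose c : ℤ) * d ^ (n - i - c)) = 0 := by
      apply Finset.sum_eq_zero
      intro i hi
      simp only [mem_range] at hi
      rcases lt_or_ge i a with h | h
      · rw [Nat.choose_eq_zero_of_lt h]; ring
      · rw [Nat.choose_eq_zero_of_lt (show n - i < c by omega)]; ring
    rw [hz, Nat.choose_eq_zero_of_lt hn]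
    simp
  · set m := n - (a+c) with hm
    have hn' : n = a + c + m := by omega
    have step1 : ∑ i ∈ Finset.Ico a (a+m+1),
        (n.choose i : ℤ) * ((i.choose a : ℤ) * b ^ (i - a)) * (((n-i).choose c : ℤ) * d ^ (n - i - c))
        = ∑ i ∈ range (n+1),
        (n.choose i : ℤ) * ((i.choose a : ℤ) * b ^ (i - a)) * (((n-i).choose c : ℤ) * d ^ (n - i - c)) := by
      apply Finset.sum_subset
      · intro x hx
        simp only [Finset.mem_Ico, Finset.mem_range] at *
        omega
      · intro i hi hi'
        simp only [Finset.mem_Ico, Finset.mem_range] at *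
        rcases lt_or_ge i a with h | h
        · rw [Nat.choose_eq_zero_of_lt h]; ring
        · rw [Nat.choose_eq_zero_of_lt (show n - i < c by omega)]; ring
    rw [← step1, Finset.sum_Ico_eq_sum_range, show a + m + 1 - a = m + 1 by omega]
    rw [add_pow]
    rw [Finset.mul_sum]
    apply Finset.sum_congr rfl
    intro j hj
    simp only [mem_range] at hj
    have hjm : j ≤ m := by omega
    rw [show a + j - a = j by omega, show n - (a + j) - c = m - j by omega,
      show n - (a + j) = c + (m - j) by omega]
    have := choose_trinom a c j (m - j)
    rw [show j + (m - j) = m by omega] at this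
    rw [← hn'] at this
    have cast := congrArg (Nat.cast : ℕ → ℤ) this
    push_cast at cast
    calc (n.choose (a+j) : ℤ) * ((a+j).choose a * b ^ j) * ((c + (m-j)).choose c * d ^ (m-j))
        = ((n.choose (a+j) : ℤ) * (a+j).choose a * (c + (m-j)).choose c) * (b ^ j * d ^ (m-j)) := by ring
      _ = (((a+c).choose a : ℤ) * n.choose (a+c) * m.choose j) * (b ^ j * d ^ (m-j)) := by rw [cast]
      _ = _ := by ring

/-- A function `ℕ → ℤ` is a finite integer linear combination of terms
`n ↦ C(n,a)·b^(n−a)` with `a, b` nonnegative integers. -/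
def IsBinExpComb (f : ℕ → ℤ) : Prop :=
  ∃ (s : Finset (ℕ × ℕ)) (c : ℕ × ℕ → ℤ),
    ∀ n : ℕ, f n = ∑ p ∈ s, c p * (n.choose p.1 : ℤ) * (p.2 : ℤ) ^ (n - p.1)

/-- the labeled convolution
`(f|g)(n) = ∑_{i+j=n} C(n,i)·f(i)·g(j)` of two such combinations is again one. -/
theorem labeledConvolution_isBinExpComb (f g : ℕ → ℤ)
    (hf : IsBinExpComb f) (hg : IsBinExpComb g) :
    IsBinExpComb (fun n => ∑ i ∈ Finset.range (n + 1), (n.choose i : ℤ) * f i * g (n - i)) := by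
  obtain ⟨s, cf, hs⟩ := hf
  obtain ⟨t, cg, ht⟩ := hg
  classical
  set φ : (ℕ × ℕ) × (ℕ × ℕ) → ℕ × ℕ := fun pq => (pq.1.1 + pq.2.1, pq.1.2 + pq.2.2) with hφ
  set w : (ℕ × ℕ) × (ℕ × ℕ) → ℤ :=
    fun pq => cf pq.1 * cg pq.2 * ((pq.1.1 + pq.2.1).choose pq.1.1 : ℤ) with hw
  refine ⟨(s ×ˢ t).image φ, fun r => ∑ pq ∈ (s ×ˢ t).filter (fun pq => φ pq = r), w pq, ?_⟩
  intro n
  -- RHS rewrite: sum over image with fibered coefficients = sum over product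
  have rhs_eq : ∑ r ∈ (s ×ˢ t).image φ,
      (∑ pq ∈ (s ×ˢ t).filter (fun pq => φ pq = r), w pq) * (n.choose r.1 : ℤ) * (r.2 : ℤ) ^ (n - r.1)
      = ∑ pq ∈ s ×ˢ t, w pq * (n.choose (φ pq).1 : ℤ) * ((φ pq).2 : ℤ) ^ (n - (φ pq).1) := by
    rw [← Finset.sum_fiberwise_of_maps_to (fun pq hpq => Finset.mem_image_of_mem φ hpq)
      (fun pq => w pq * (n.choose (φ pq).1 : ℤ) * ((φ pq).2 : ℤ) ^ (n - (φ pq).1))]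
    apply Finset.sum_congr rfl
    intro r hr
    rw [Finset.sum_mul, Finset.sum_mul]
    apply Finset.sum_congr rfl
    intro pq hpq
    simp only [Finset.mem_filter] at hpq
    rw [hpq.2]
  rw [rhs_eq]
  -- LHS: expand f and g and swap sums
  calc ∑ i ∈ Finset.range (n + 1), (n.choose i : ℤ) * f i * g (n - i)
      = ∑ i ∈ Finset.range (n + 1), ∑ p ∈ s, ∑ q ∈ t,
        (n.choose i : ℤ) * (cf p * (i.choose p.1 : ℤ) * (p.2 : ℤ) ^ (i - p.1))
          * (cg q * ((n-i).choose q.1 : ℤ) * (q.2 : ℤ) ^ (n - i - q.1)) := by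
        apply Finset.sum_congr rfl
        intro i _
        rw [hs i, ht (n - i)]
        simp only [Finset.mul_sum, Finset.sum_mul]
        exact Finset.sum_comm
    _ = ∑ p ∈ s, ∑ q ∈ t, ∑ i ∈ Finset.range (n + 1),
        (n.choose i : ℤ) * (cf p * (i.choose p.1 : ℤ) * (p.2 : ℤ) ^ (i - p.1))
          * (cg q * ((n-i).choose q.1 : ℤ) * (q.2 : ℤ) ^ (n - i - q.1)) := by
        rw [Finset.sum_comm]
        apply Finset.sum_congr rfl; intro p _
        rw [Finset.sum_comm]
    _ = ∑ pq ∈ s ×ˢ t, w pq * (n.choose (φ pq).1 : ℤ) * ((φ pq).2 : ℤ) ^ (n - (φ pq).1) := by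
        rw [Finset.sum_product]
        apply Finset.sum_congr rfl; intro p _
        apply Finset.sum_congr rfl; intro q _
        have expand : ∑ i ∈ Finset.range (n + 1),
            (n.choose i : ℤ) * (cf p * (i.choose p.1 : ℤ) * (p.2 : ℤ) ^ (i - p.1))
              * (cg q * ((n-i).choose q.1 : ℤ) * (q.2 : ℤ) ^ (n - i - q.1))
            = cf p * cg q * ∑ i ∈ Finset.range (n + 1),
              (n.choose i : ℤ) * ((i.choose p.1 : ℤ) * (p.2 : ℤ) ^ (i - p.1))
                * (((n-i).choose q.1 : ℤ) * (q.2 : ℤ) ^ (n - i - q.1)) := by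
          rw [Finset.mul_sum]
          apply Finset.sum_congr rfl; intro i _
          ring
        rw [expand, key_conv n p.1 q.1 (p.2 : ℤ) (q.2 : ℤ)]
        simp only [hw, hφ]
        push_cast
        ring
end

section
/- In the cell complex of ordered symbols on n labels, if the coefficient of a face (a | b) in the boundary of a top cell g is defined as (−1)^{length(a)} times the sign of the permutation taking g to the concatenation ab, and the boundary is extended to concatenation products by the Leibniz rule ∂(g₁|g₂) = ∂g₁|g₂ + (−1)^{dim g₁} g₁|∂g₂, then ∂² = 0. -/
/-!
Cells of the complex `cel(A)` are *symbols*: ordered lists of nonempty blocks (ordered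
lists) with pairwise distinct entries.  We define the boundary operator on the free
abelian group on symbols: the coefficient of a face `(a | b)` in the boundary of a
one-block (top) cell `g` is `(−1)^{length a}` times the sign of the permutation taking
`g` to the concatenation `a ++ b`, and the boundary is extended to concatenation
products by the Leibniz rule.  STATEMENT 3: `∂² = 0`.
-/

/-- All ways to unshuffle a list into a pair of complementary subsequences, together
with the sign of the permutation taking the list to the concatenation of the pair.
(When an element is sent to the second part, the sign changes by `(−1)^{#elements
already placed in the first part among later elements}`, computed recursively.) -/
def unshuffles : List ℕ → List (List ℕ × List ℕ × ℤ)
  | [] => [([], [], 1)]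
  | x :: l =>
      ((unshuffles l).map fun p => (x :: p.1, p.2.1, p.2.2)) ++
      ((unshuffles l).map fun p => (p.1, x :: p.2.1, p.2.2 * (-1) ^ p.1.length))

/-- The boundary of a top cell (a single block `b`): the sum over proper unshuffles
`b ↦ (a | c)` of the symbol `[a, c]` with coefficient `(−1)^{length a} · sgn`. -/
noncomputable def blockBdry (b : List ℕ) : (List (List ℕ)) →₀ ℤ :=
  ((unshuffles b).map fun p =>
      if p.1 ≠ [] ∧ p.2.1 ≠ [] then
        Finsupp.single [p.1, p.2.1] ((-1) ^ p.1.length * p.2.2)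
      else 0).sum

/-- The boundary of a symbol, extended from top cells by the Leibniz rule
`∂(g₁|g₂) = ∂g₁|g₂ + (−1)^{dim g₁} g₁|∂g₂` (a block `b` has dimension `length b − 1`). -/
noncomputable def bdry : List (List ℕ) → ((List (List ℕ)) →₀ ℤ)
  | [] => 0
  | b :: rest =>
      Finsupp.mapDomain (fun s => s ++ rest) (blockBdry b) +
        ((-1 : ℤ) ^ (b.length - 1)) • Finsupp.mapDomain (List.cons b) (bdry rest)

/-- The linear extension of the boundary operator to integral chains. -/
noncomputable def bdryChain (c : (List (List ℕ)) →₀ ℤ) : (List (List ℕ)) →₀ ℤ :=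
  c.sum fun s k => k • bdry s

/-!
The boundary is a derivation of degree `-1` for concatenation, and every face
of a symbol `s` has dimension `dim s - 1`; hence the two cross terms `∂s | ∂t` in `∂²(s | t)`
carry opposite signs, `∂²` is an (even) derivation, and it suffices to show `∂² b = 0` for a
single block `b`. There `∂² b` is a signed sum over the 3-part unshuffles of `b`, obtained once by
unshuffling `b` and then its left part and once by unshuffling `b` and then its right part, and
the two sums enter with opposite signs. They agree by coassociativity of unshuffling: both obey
the same recursion in the first letter of `b`.
-/

open Finsupp

lemma mapDomain_list_sum {α β M : Type*} [AddCommMonoid M] (f : α → β) (l : List (α →₀ M)) :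
    mapDomain f l.sum = (l.map (mapDomain f)).sum :=
  map_list_sum (mapDomain.addMonoidHom f) l

lemma length_add_length_of_mem_unshuffles {b : List ℕ} {p : List ℕ × List ℕ × ℤ}
    (hp : p ∈ unshuffles b) : p.1.length + p.2.1.length = b.length := by
  induction b generalizing p with
  | nil => simp_all [unshuffles]
  | cons x b ih =>
    simp only [unshuffles, List.mem_append, List.mem_map] at hp
    rcases hp with ⟨q, hq, rfl⟩ | ⟨q, hq, rfl⟩ <;> simp [← ih hq] <;> omega

noncomputable def unshufflesLeft (b : List ℕ) : List ℕ × List ℕ × List ℕ →₀ ℤ :=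
  ((unshuffles b).map fun p => ((unshuffles p.1).map fun q =>
      single (q.1, q.2.1, p.2.1) (p.2.2 * q.2.2)).sum).sum

noncomputable def unshufflesRight (b : List ℕ) : List ℕ × List ℕ × List ℕ →₀ ℤ :=
  ((unshuffles b).map fun p => ((unshuffles p.2.1).map fun q =>
      single (p.1, q.1, q.2.1) (p.2.2 * q.2.2)).sum).sum

/-- Prepending `v` to one of the three parts of a signed unshuffle; the sign counts the
entries that `v` moves past. -/
noncomputable def consTriple (v : ℕ) (t : List ℕ × List ℕ × List ℕ) :
    List ℕ × List ℕ × List ℕ →₀ ℤ :=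
  single (v :: t.1, t.2.1, t.2.2) 1 + single (t.1, v :: t.2.1, t.2.2) ((-1) ^ t.1.length) +
    single (t.1, t.2.1, v :: t.2.2) ((-1) ^ (t.1.length + t.2.1.length))

lemma unshufflesLeft_cons (v : ℕ) (b : List ℕ) :
    unshufflesLeft (v :: b) = linearCombination ℤ (consTriple v) (unshufflesLeft b) := by
  simp only [unshufflesLeft, map_list_sum, List.map_map, Function.comp_def,
    linearCombination_single, consTriple, smul_add, smul_single, smul_eq_mul, unshuffles,
    List.map_append, List.sum_append, List.sum_map_add, mul_one, mul_assoc]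
  congr 1
  refine congrArg List.sum (List.map_congr_left fun p _ => ?_)
  refine congrArg List.sum (List.map_congr_left fun q hq => ?_)
  rw [length_add_length_of_mem_unshuffles hq]
  ring_nf

lemma unshufflesRight_cons (v : ℕ) (b : List ℕ) :
    unshufflesRight (v :: b) = linearCombination ℤ (consTriple v) (unshufflesRight b) := by
  simp only [unshufflesRight, map_list_sum, List.map_map, Function.comp_def,
    linearCombination_single, consTriple, smul_add, smul_single, smul_eq_mul, unshuffles,
    List.map_append, List.sum_append, List.sum_map_add, mul_one, pow_add, add_assoc]
  congr 2
  all_goals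
    refine congrArg List.sum (List.map_congr_left fun p _ => ?_)
    refine congrArg List.sum (List.map_congr_left fun q _ => ?_)
    ring_nf

theorem unshufflesLeft_eq_unshufflesRight (b : List ℕ) :
    unshufflesLeft b = unshufflesRight b := by
  induction b with
  | nil => rfl
  | cons v b ih => rw [unshufflesLeft_cons, unshufflesRight_cons, ih]

/-- The dimension `|A| - r`, counted block by block: the truncated subtraction only matters
for empty blocks, which no face contains. -/
def symDim (s : List (List ℕ)) : ℕ :=
  (s.map fun b => b.length - 1).sum

@[simp] lemma symDim_nil : symDim [] = 0 := rfl

@[simp] lemma symDim_cons (b : List ℕ) (s : List (List ℕ)) :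
    symDim (b :: s) = (b.length - 1) + symDim s := by
  simp [symDim]

@[simp] lemma symDim_append (s t : List (List ℕ)) : symDim (s ++ t) = symDim s + symDim t := by
  simp [symDim]

lemma bdry_cons (b : List ℕ) (s : List (List ℕ)) :
    bdry (b :: s) = mapDomain (· ++ s) (blockBdry b) +
      ((-1 : ℤ) ^ (b.length - 1)) • mapDomain (List.cons b) (bdry s) := rfl

lemma bdry_singleton (b : List ℕ) : bdry [b] = blockBdry b := by
  simp only [bdry, mapDomain_zero, smul_zero, add_zero, List.append_nil]
  exact mapDomain_id

theorem bdry_append (s t : List (List ℕ)) :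
    bdry (s ++ t) = mapDomain (· ++ t) (bdry s) +
      ((-1 : ℤ) ^ symDim s) • mapDomain (s ++ ·) (bdry t) := by
  induction s with
  | nil =>
    simp only [List.nil_append, bdry, mapDomain_zero, symDim_nil, pow_zero, one_smul, zero_add]
    exact mapDomain_id.symm
  | cons b s ih =>
    simp only [List.cons_append, bdry_cons, ih, mapDomain_add, mapDomain_smul, smul_add,
      smul_smul, ← mapDomain_comp, Function.comp_def, List.append_assoc, symDim_cons, pow_add]
    abel

lemma blockBdry_mem_supported (b : List ℕ) :
    blockBdry b ∈ supported ℤ ℤ {u | symDim u + 1 = b.length - 1} := by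
  refine list_sum_mem fun x hx => ?_
  obtain ⟨p, hp, rfl⟩ := List.mem_map.1 hx
  split_ifs with h
  · refine single_mem_supported ℤ _ ?_
    have := length_add_length_of_mem_unshuffles hp
    have := List.length_pos_iff.2 h.1
    have := List.length_pos_iff.2 h.2
    simp only [Set.mem_ofPred_eq, symDim_cons, symDim_nil]
    omega
  · exact zero_mem _

theorem bdry_mem_supported (s : List (List ℕ)) :
    bdry s ∈ supported ℤ ℤ {u | symDim u + 1 = symDim s} := by
  induction s with
  | nil => exact zero_mem _
  | cons b s ih =>
    rw [bdry_cons]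
    refine add_mem (supported_comap_lmapDomain ℤ ℤ _ _ ?_) (Submodule.smul_mem _ _
      (supported_comap_lmapDomain ℤ ℤ _ _ ?_))
    · refine supported_mono (fun u hu => ?_) (blockBdry_mem_supported b)
      simp_all only [Set.mem_ofPred_eq, Set.mem_preimage, symDim_append, symDim_cons]
      omega
    · refine supported_mono (fun u hu => ?_) ih
      simp_all only [Set.mem_ofPred_eq, Set.mem_preimage, symDim_cons]
      omega

noncomputable def concatChain (c c' : List (List ℕ) →₀ ℤ) : List (List ℕ) →₀ ℤ :=
  c.sum fun u k => c'.sum fun v l => single (u ++ v) (k * l)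

lemma concatChain_eq_sum_left (c c' : List (List ℕ) →₀ ℤ) :
    concatChain c c' = c.sum fun u k => k • mapDomain (u ++ ·) c' := by
  refine sum_congr fun u _ => ?_
  simp only [mapDomain, smul_sum, smul_single, smul_eq_mul]

lemma concatChain_eq_sum_right (c c' : List (List ℕ) →₀ ℤ) :
    concatChain c c' = c'.sum fun v l => l • mapDomain (· ++ v) c := by
  rw [concatChain, sum_comm]
  refine sum_congr fun v _ => ?_
  simp only [mapDomain, smul_sum, smul_single, smul_eq_mul, mul_comm]

theorem linearCombination_bdry_mapDomain_append_right {n : ℕ} {c : List (List ℕ) →₀ ℤ}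
    (hc : c ∈ supported ℤ ℤ {u | symDim u + 1 = n}) (t : List (List ℕ)) :
    linearCombination ℤ bdry (mapDomain (· ++ t) c) =
      mapDomain (· ++ t) (linearCombination ℤ bdry c) - (-1 : ℤ) ^ n • concatChain c (bdry t) := by
  rw [linearCombination_mapDomain, linearCombination_apply, linearCombination_apply,
    mapDomain_sum, concatChain_eq_sum_left, smul_sum, ← sum_sub]
  refine sum_congr fun u hu => ?_
  rw [Function.comp_apply, bdry_append, ← (mem_supported ℤ c).1 hc hu, pow_succ, smul_add,
    mapDomain_smul, smul_comm (c u), mul_neg_one, neg_smul, sub_neg_eq_add]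

theorem linearCombination_bdry_mapDomain_append_left (s : List (List ℕ))
    (c : List (List ℕ) →₀ ℤ) :
    linearCombination ℤ bdry (mapDomain (s ++ ·) c) =
      concatChain (bdry s) c +
        (-1 : ℤ) ^ symDim s • mapDomain (s ++ ·) (linearCombination ℤ bdry c) := by
  rw [linearCombination_mapDomain, linearCombination_apply, linearCombination_apply,
    concatChain_eq_sum_right, mapDomain_sum, smul_sum, ← sum_add]
  refine sum_congr fun v _ => ?_
  rw [Function.comp_apply, bdry_append, smul_add, mapDomain_smul, smul_comm]

theorem linearCombination_bdry_bdry_append (s t : List (List ℕ)) :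
    linearCombination ℤ bdry (bdry (s ++ t)) =
      mapDomain (· ++ t) (linearCombination ℤ bdry (bdry s)) +
        mapDomain (s ++ ·) (linearCombination ℤ bdry (bdry t)) := by
  rw [bdry_append, map_add, map_smul,
    linearCombination_bdry_mapDomain_append_right (bdry_mem_supported s),
    linearCombination_bdry_mapDomain_append_left, smul_add, smul_smul, ← mul_pow,
    neg_one_mul, neg_neg, one_pow, one_smul]
  abel

def faceCoeff (a c : List ℕ) : ℤ :=
  if a ≠ [] ∧ c ≠ [] then (-1) ^ a.length else 0

lemma blockBdry_eq_sum (b : List ℕ) :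
    blockBdry b = ((unshuffles b).map fun p =>
      single [p.1, p.2.1] (faceCoeff p.1 p.2.1 * p.2.2)).sum := by
  refine congrArg List.sum (List.map_congr_left fun p _ => ?_)
  unfold faceCoeff
  split_ifs <;> simp

lemma bdry_pair (a c : List ℕ) :
    bdry [a, c] =
      ((unshuffles a).map fun q => single [q.1, q.2.1, c] (faceCoeff q.1 q.2.1 * q.2.2)).sum +
      ((unshuffles c).map fun q =>
        single [a, q.1, q.2.1] ((-1) ^ (a.length - 1) * (faceCoeff q.1 q.2.1 * q.2.2))).sum := by
  rw [bdry_cons, bdry_singleton]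
  simp only [blockBdry_eq_sum, mapDomain_list_sum, List.map_map,
    Function.comp_def, mapDomain_single, List.smul_sum, smul_single, smul_eq_mul,
    List.cons_append, List.nil_append]

def tripleCoeff (t : List ℕ × List ℕ × List ℕ) : ℤ :=
  if t.1 ≠ [] ∧ t.2.1 ≠ [] ∧ t.2.2 ≠ [] then (-1) ^ t.2.1.length else 0

noncomputable def tripleChain : (List ℕ × List ℕ × List ℕ →₀ ℤ) →ₗ[ℤ] List (List ℕ) →₀ ℤ :=
  linearCombination ℤ fun t => single [t.1, t.2.1, t.2.2] (tripleCoeff t)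

lemma faceCoeff_mul_faceCoeff_left {a c x y : List ℕ} (h : x.length + y.length = a.length) :
    faceCoeff a c * faceCoeff x y = tripleCoeff (x, y, c) := by
  by_cases hxyc : x ≠ [] ∧ y ≠ [] ∧ c ≠ []
  · have ha : a ≠ [] := by
      simp only [← List.length_pos_iff] at hxyc ⊢
      omega
    rw [faceCoeff, faceCoeff, tripleCoeff, if_pos ⟨ha, hxyc.2.2⟩, if_pos ⟨hxyc.1, hxyc.2.1⟩,
      if_pos hxyc, ← h, pow_add, mul_right_comm, ← mul_pow, neg_one_mul, neg_neg, one_pow,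
      one_mul]
  · rw [tripleCoeff, if_neg hxyc]
    unfold faceCoeff
    split_ifs <;> simp_all

lemma faceCoeff_mul_faceCoeff_right {a c x y : List ℕ} (h : x.length + y.length = c.length) :
    faceCoeff a c * ((-1) ^ (a.length - 1) * faceCoeff x y) = -tripleCoeff (a, x, y) := by
  by_cases haxy : a ≠ [] ∧ x ≠ [] ∧ y ≠ []
  · have hc : c ≠ [] := by
      simp only [← List.length_pos_iff] at haxy ⊢
      omega
    obtain ⟨m, hm⟩ := Nat.exists_eq_add_one.2 (List.length_pos_iff.2 haxy.1)
    rw [faceCoeff, faceCoeff, tripleCoeff, if_pos ⟨haxy.1, hc⟩, if_pos haxy.2, if_pos haxy, hm,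
      Nat.add_sub_cancel]
    linear_combination (-(-1) ^ x.length : ℤ) *
      pow_mul_pow_eq_one m (by norm_num : (-1 : ℤ) * -1 = 1)
  · rw [tripleCoeff, if_neg haxy]
    unfold faceCoeff
    split_ifs <;> simp_all

theorem linearCombination_bdry_blockBdry (b : List ℕ) :
    linearCombination ℤ bdry (blockBdry b) =
      tripleChain (unshufflesLeft b) - tripleChain (unshufflesRight b) := by
  simp only [blockBdry_eq_sum, unshufflesLeft, unshufflesRight, map_list_sum, List.map_map,
    Function.comp_def, linearCombination_single, tripleChain, bdry_pair, smul_add, List.smul_sum,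
    smul_single, smul_eq_mul, List.sum_map_add, sub_eq_add_neg, List.sum_neg]
  congr 1 <;>
  refine congrArg List.sum (List.map_congr_left fun p _ => ?_) <;>
  refine congrArg List.sum (List.map_congr_left fun q hq => ?_)
  · congr 1
    linear_combination (p.2.2 * q.2.2) *
      faceCoeff_mul_faceCoeff_left (c := p.2.1) (length_add_length_of_mem_unshuffles hq)
  · rw [← single_neg]
    congr 1
    linear_combination (p.2.2 * q.2.2) *
      faceCoeff_mul_faceCoeff_right (a := p.1) (length_add_length_of_mem_unshuffles hq)

theorem bdry_bdry_eq_zero_general (g : List (List ℕ)) : bdryChain (bdry g) = 0 := by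
  rw [bdryChain, ← linearCombination_apply]
  induction g with
  | nil => exact map_zero _
  | cons b g ih =>
    rw [← List.singleton_append, linearCombination_bdry_bdry_append, ih, bdry_singleton,
      linearCombination_bdry_blockBdry, unshufflesLeft_eq_unshufflesRight, sub_self,
      mapDomain_zero, mapDomain_zero, add_zero]

/-- for every symbol `g` (nonempty blocks, distinct entries), `∂(∂ g) = 0`. -/
theorem bdry_bdry_eq_zero (g : List (List ℕ)) (h₁ : ∀ b ∈ g, b ≠ [])
    (h₂ : g.flatten.Nodup) : bdryChain (bdry g) = 0 :=
  bdry_bdry_eq_zero_general g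
end

section
/- For a finite polyhedral cell complex with a total ordering on cells inducing a discrete gradient vector field (pairing a cell f with a cell g exactly when f is the greatest face of g and g is the least coface of f), suppose for each critical (unpaired) cell e there is a cellular cycle z(e) in which e appears with coefficient ±1 and is the greatest cell appearing with nonzero coefficient. Then the homology classes of the cycles z(e) form a ℤ-basis of the cellular homology of the complex. -/
/-!
Order-induced change of basis of the chains: keep every cell that is matched as a coface,
replace a cell `f` matched as a face of `g` by `∂g` (whose greatest cell is `f`, with
coefficient `±1` by polyhedrality), and a critical cell `e` by `z e`. This family is
unitriangular, hence a basis, and `∂` kills all of it except the coface cells, whose boundaries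
are again triangular with distinct leading cells. So a cycle has no coface component, i.e. it is
a combination of the `z e` modulo boundaries; and the `z e` together with the boundaries of the
coface cells form one triangular, hence linearly independent, family, which gives uniqueness.
-/

/-- `f` is a face of `g` (nonzero incidence coefficient). -/
def IsFace (d : ((ι : Type) →₀ ℤ) →ₗ[ℤ] (ι →₀ ℤ)) (g f : ι) : Prop :=
  d (Finsupp.single g 1) f ≠ 0

def Matched {ι : Type} [LinearOrder ι] (d : (ι →₀ ℤ) →ₗ[ℤ] (ι →₀ ℤ)) (f g : ι) : Prop :=
  IsFace d g f ∧ (∀ f', IsFace d g f' → f' ≤ f) ∧ ∀ g', IsFace d g' f → g ≤ g'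

def Critical {ι : Type} [LinearOrder ι] (d : (ι →₀ ℤ) →ₗ[ℤ] (ι →₀ ℤ)) (e : ι) : Prop :=
  (¬ ∃ g, Matched d e g) ∧ ¬ ∃ f, Matched d f e

open Finset

section Triangular

variable {ι R : Type*} [LinearOrder ι]

theorem coeff_eq_zero_of_sum_smul_eq_zero_of_triangular [Semiring R] [NoZeroDivisors R]
    {κ : Type*} (s : Finset κ) (w : κ → ι →₀ R) (L : κ → ι) (hL : Set.InjOn L s)
    (hlead : ∀ k ∈ s, w k (L k) ≠ 0) (hle : ∀ k ∈ s, ∀ j, w k j ≠ 0 → j ≤ L k)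
    (a : κ → R) (h : ∑ k ∈ s, a k • w k = 0) : ∀ k ∈ s, a k = 0 := by
  classical
  by_contra! ⟨k₀, hk₀s, hk₀⟩
  obtain ⟨k, hk, hmax⟩ :=
    (s.filter (a · ≠ 0)).exists_max_image L ⟨k₀, mem_filter.2 ⟨hk₀s, hk₀⟩⟩
  rw [mem_filter] at hk
  -- at the largest leading index, only the term of `k` contributes
  have hcoeff : (∑ k ∈ s, a k • w k) (L k) = a k * w k (L k) := by
    rw [Finsupp.finsetSum_apply, sum_eq_single_of_mem k hk.1]
    · rfl
    intro k' hk's hne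
    by_cases ha : a k' = 0
    · simp [ha]
    have hw : w k' (L k) = 0 := by
      by_contra hw
      exact hne (hL hk's hk.1 ((hmax k' (mem_filter.2 ⟨hk's, ha⟩)).antisymm (hle k' hk's _ hw)))
    simp [hw]
  rw [h, Finsupp.zero_apply, eq_comm] at hcoeff
  exact mul_ne_zero hk.2 (hlead k hk.1) hcoeff

theorem span_range_eq_top_of_triangular [Ring R] [WellFoundedLT ι]
    (β : ι → ι →₀ R) (hunit : ∀ i, IsUnit (β i i)) (hle : ∀ i j, β i j ≠ 0 → j ≤ i) :
    Submodule.span R (Set.range β) = ⊤ := by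
  set S := Submodule.span R (Set.range β)
  suffices hsingle : ∀ i, Finsupp.single i (1 : R) ∈ S by
    rw [eq_top_iff, ← Finsupp.supported_univ, Finsupp.supported_eq_span_single,
      Submodule.span_le]
    rintro _ ⟨i, -, rfl⟩
    exact hsingle i
  intro i
  induction i using WellFoundedLT.induction with
  | _ i IH =>
    set x := β i - β i i • Finsupp.single i 1
    have hx : x ∈ Finsupp.supported R R (Set.Iio i) := by
      rw [Finsupp.mem_supported']
      intro j hj
      rcases (not_lt.1 hj).eq_or_lt with rfl | hij
      · simp [x]
      · have : β i j = 0 := by_contra fun h => absurd hij (not_lt.2 (hle i j h))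
        simp [x, this, Finsupp.single_eq_of_ne' hij.ne]
    have hxS : x ∈ S := by
      rw [Finsupp.supported_eq_span_single] at hx
      refine Submodule.span_le.2 ?_ hx
      rintro _ ⟨j, hj, rfl⟩
      exact IH j hj
    have : β i i • Finsupp.single i 1 ∈ S := by
      rw [← sub_sub_cancel (β i) (β i i • Finsupp.single i 1)]
      exact S.sub_mem (Submodule.subset_span ⟨i, rfl⟩) hxS
    exact (S.smul_mem_iff_of_isUnit (hunit i)).1 this

end Triangular

theorem Matched.coface_unique {ι : Type} [LinearOrder ι] {d : (ι →₀ ℤ) →ₗ[ℤ] (ι →₀ ℤ)}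
    {f g g' : ι} (h : Matched d f g) (h' : Matched d f g') : g = g' :=
  le_antisymm (h.2.2 g' h'.1) (h'.2.2 g h.1)

section Morse

variable {ι : Type} [LinearOrder ι] (d : (ι →₀ ℤ) →ₗ[ℤ] (ι →₀ ℤ)) (z : ι → ι →₀ ℤ)

structure IsMaxCycleFamily : Prop where
  map_eq_zero : ∀ e, Critical d e → d (z e) = 0
  isUnit_apply_self : ∀ e, Critical d e → IsUnit (z e e)
  le_of_apply_ne_zero : ∀ e, Critical d e → ∀ i, z e i ≠ 0 → i ≤ e

open Classical in
noncomputable def matchedFace (g : ι) : ι :=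
  if h : ∃ f, Matched d f g then h.choose else g

open Classical in
noncomputable def morseChain (i : ι) : ι →₀ ℤ :=
  if ∃ f, Matched d f i then Finsupp.single i 1
  else if h : ∃ g, Matched d i g then d (Finsupp.single h.choose 1)
  else z i

variable {d z}

theorem matched_matchedFace {g : ι} (h : ∃ f, Matched d f g) :
    Matched d (matchedFace d g) g := by
  rw [matchedFace, dif_pos h]
  exact h.choose_spec

theorem injOn_matchedFace : Set.InjOn (matchedFace d) {g | ∃ f, Matched d f g} :=
  fun _ hg _ hg' h =>
    (matched_matchedFace hg).coface_unique (h ▸ matched_matchedFace hg')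

theorem morseChain_eq_single {i : ι} (h : ∃ f, Matched d f i) :
    morseChain d z i = Finsupp.single i 1 := by
  rw [morseChain, if_pos h]

theorem exists_morseChain_eq_boundary {i : ι} (hu : ¬∃ f, Matched d f i) (hl : ∃ g, Matched d i g) :
    ∃ g, Matched d i g ∧ morseChain d z i = d (Finsupp.single g 1) := by
  refine ⟨hl.choose, hl.choose_spec, ?_⟩
  rw [morseChain, if_neg hu, dif_pos hl]

theorem morseChain_eq_cycle {i : ι} (h : Critical d i) : morseChain d z i = z i := by
  rw [morseChain, if_neg h.2, dif_neg h.1]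

theorem isUnit_morseChain_apply_self
    (hpoly : ∀ g f, IsFace d g f → IsUnit (d (Finsupp.single g 1) f))
    (hz : IsMaxCycleFamily d z) (i : ι) : IsUnit (morseChain d z i i) := by
  by_cases hu : ∃ f, Matched d f i
  · simp [morseChain_eq_single hu]
  by_cases hl : ∃ g, Matched d i g
  · obtain ⟨g, hg, heq⟩ := exists_morseChain_eq_boundary (z := z) hu hl
    exact heq ▸ hpoly g i hg.1
  · exact morseChain_eq_cycle (z := z) ⟨hl, hu⟩ ▸ hz.isUnit_apply_self i ⟨hl, hu⟩

theorem le_of_morseChain_apply_ne_zero (hz : IsMaxCycleFamily d z) {i j : ι}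
    (hj : morseChain d z i j ≠ 0) : j ≤ i := by
  by_cases hu : ∃ f, Matched d f i
  · rw [morseChain_eq_single hu] at hj
    exact (Finsupp.single_apply_ne_zero.1 hj).1.le
  by_cases hl : ∃ g, Matched d i g
  · obtain ⟨g, hg, heq⟩ := exists_morseChain_eq_boundary (z := z) hu hl
    rw [heq] at hj
    exact hg.2.1 j hj
  · rw [morseChain_eq_cycle ⟨hl, hu⟩] at hj
    exact hz.le_of_apply_ne_zero i ⟨hl, hu⟩ j hj

theorem map_morseChain_eq_zero (hdd : ∀ c, d (d c) = 0) (hz : IsMaxCycleFamily d z)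
    {i : ι} (hu : ¬∃ f, Matched d f i) : d (morseChain d z i) = 0 := by
  by_cases hl : ∃ g, Matched d i g
  · obtain ⟨g, -, heq⟩ := exists_morseChain_eq_boundary (z := z) hu hl
    rw [heq, hdd]
  · rw [morseChain_eq_cycle ⟨hl, hu⟩, hz.map_eq_zero i ⟨hl, hu⟩]

variable [Fintype ι]

theorem exists_sum_smul_morseChain_eq
    (hpoly : ∀ g f, IsFace d g f → IsUnit (d (Finsupp.single g 1) f))
    (hz : IsMaxCycleFamily d z) (c : ι →₀ ℤ) : ∃ a : ι → ℤ, ∑ i, a i • morseChain d z i = c := by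
  rw [← Submodule.mem_span_range_iff_exists_fun,
    span_range_eq_top_of_triangular _ (isUnit_morseChain_apply_self hpoly hz)
      (fun _ _ => le_of_morseChain_apply_ne_zero hz)]
  exact Submodule.mem_top

open Classical in
theorem map_sum_smul_morseChain (hdd : ∀ c, d (d c) = 0) (hz : IsMaxCycleFamily d z)
    (a : ι → ℤ) :
    d (∑ i, a i • morseChain d z i) =
      ∑ g ∈ univ.filter (∃ f, Matched d f ·), a g • d (Finsupp.single g 1) := by
  rw [map_sum, sum_filter]
  refine sum_congr rfl fun i _ => ?_
  split_ifs with hu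
  · rw [map_smul, morseChain_eq_single hu]
  · rw [map_smul, map_morseChain_eq_zero hdd hz hu, smul_zero]

open Classical in
theorem eq_zero_of_sum_smul_cycles_add_sum_smul_boundaries_eq_zero
    (hz : IsMaxCycleFamily d z) (μ a : ι → ℤ)
    (h : ∑ e ∈ univ.filter (Critical d), μ e • z e +
      ∑ g ∈ univ.filter (∃ f, Matched d f ·), a g • d (Finsupp.single g 1) = 0) :
    (∀ e, Critical d e → μ e = 0) ∧ ∀ g, (∃ f, Matched d f g) → a g = 0 := by
  set K := univ.filter (Critical d)
  set U := univ.filter (∃ f, Matched d f ·)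
  have hK : ∀ e, .inl e ∈ K.disjSum U ↔ Critical d e := by simp [K]
  have hU : ∀ g, .inr g ∈ K.disjSum U ↔ ∃ f, Matched d f g := by simp [U]
  have hzero := coeff_eq_zero_of_sum_smul_eq_zero_of_triangular (K.disjSum U)
    (Sum.elim z fun g => d (Finsupp.single g 1)) (Sum.elim id (matchedFace d)) ?inj ?lead ?le
    (Sum.elim μ a) (by rwa [sum_disjSum])
  · exact ⟨fun e he => hzero _ ((hK e).2 he), fun g hg => hzero _ ((hU g).2 hg)⟩
  case inj =>
    rintro (e | g) h (e' | g') h' heq <;> simp only [Sum.elim_inl, Sum.elim_inr, id] at heq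
    · exact congrArg _ heq
    · exact absurd ⟨g', heq ▸ matched_matchedFace ((hU g').1 h')⟩ ((hK e).1 h).1
    · exact absurd ⟨g, heq ▸ matched_matchedFace ((hU g).1 h)⟩ ((hK e').1 h').1
    · exact congrArg _ (injOn_matchedFace ((hU g).1 h) ((hU g').1 h') heq)
  case lead =>
    rintro (e | g) h
    · exact (hz.isUnit_apply_self e ((hK e).1 h)).ne_zero
    · exact (matched_matchedFace ((hU g).1 h)).1
  case le =>
    rintro (e | g) h
    · exact hz.le_of_apply_ne_zero e ((hK e).1 h)
    · exact (matched_matchedFace ((hU g).1 h)).2.1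

theorem exists_sum_smul_sub_mem_range (hdd : ∀ c, d (d c) = 0)
    (hpoly : ∀ g f, IsFace d g f → IsUnit (d (Finsupp.single g 1) f))
    (hz : IsMaxCycleFamily d z) {c : ι →₀ ℤ} (hc : d c = 0) :
    ∃ lam : ι → ℤ, (∀ e, ¬Critical d e → lam e = 0) ∧
      c - ∑ e, lam e • z e ∈ LinearMap.range d := by
  classical
  obtain ⟨a, rfl⟩ := exists_sum_smul_morseChain_eq hpoly hz c
  rw [map_sum_smul_morseChain hdd hz] at hc
  have hupper : ∀ g, (∃ f, Matched d f g) → a g = 0 :=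
    (eq_zero_of_sum_smul_cycles_add_sum_smul_boundaries_eq_zero hz 0 a (by simpa using hc)).2
  refine ⟨fun e => if Critical d e then a e else 0, fun e he => if_neg he, ?_⟩
  rw [← sum_sub_distrib]
  refine Submodule.sum_mem _ fun i _ => ?_
  dsimp only
  by_cases hu : ∃ f, Matched d f i
  · rw [hupper i hu, if_neg fun h : Critical d i => h.2 hu, zero_smul, zero_smul, sub_zero]
    exact zero_mem _
  by_cases hl : ∃ g, Matched d i g
  · obtain ⟨g, -, heq⟩ := exists_morseChain_eq_boundary (z := z) hu hl
    rw [heq, if_neg fun h : Critical d i => h.1 hl, zero_smul, sub_zero, ← map_smul]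
    exact LinearMap.mem_range_self _ _
  · rw [morseChain_eq_cycle ⟨hl, hu⟩, if_pos ⟨hl, hu⟩, sub_self]
    exact zero_mem _

theorem eq_zero_of_sum_smul_mem_range (hdd : ∀ c, d (d c) = 0)
    (hpoly : ∀ g f, IsFace d g f → IsUnit (d (Finsupp.single g 1) f))
    (hz : IsMaxCycleFamily d z) {μ : ι → ℤ} (hμ : ∀ e, ¬Critical d e → μ e = 0)
    (h : ∑ e, μ e • z e ∈ LinearMap.range d) : μ = 0 := by
  classical
  obtain ⟨b, hb⟩ := h
  obtain ⟨a, rfl⟩ := exists_sum_smul_morseChain_eq hpoly hz b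
  rw [map_sum_smul_morseChain hdd hz] at hb
  have hcrit : ∑ e ∈ univ.filter (Critical d), μ e • z e = ∑ e, μ e • z e :=
    sum_filter_of_ne fun e _ hne => by_contra fun he => hne (by rw [hμ e he, zero_smul])
  have hcycle := eq_zero_of_sum_smul_cycles_add_sum_smul_boundaries_eq_zero hz μ (-a)
    (by simp only [hcrit, ← hb, Pi.neg_apply, neg_smul, sum_neg_distrib, add_neg_cancel])
  funext e
  by_cases he : Critical d e
  · exact hcycle.1 e he
  · exact hμ e he

end Morse

theorem discrete_morse_max_basis_general {ι : Type} [Fintype ι] [LinearOrder ι]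
    (deg : ι → ℕ) (d : (ι →₀ ℤ) →ₗ[ℤ] (ι →₀ ℤ))
    (hdd : ∀ c, d (d c) = 0)
    (hpoly : ∀ e i, d (Finsupp.single e 1) i = 1 ∨ d (Finsupp.single e 1) i = -1 ∨
      d (Finsupp.single e 1) i = 0)
    (z : ι → (ι →₀ ℤ))
    (hz : ∀ e, Critical d e →
      d (z e) = 0 ∧ (z e e = 1 ∨ z e e = -1) ∧ (∀ i, z e i ≠ 0 → i ≤ e) ∧
        ∀ i, z e i ≠ 0 → deg i = deg e) :
    ∀ c : ι →₀ ℤ, d c = 0 →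
      ∃! lam : ι → ℤ, (∀ e, ¬ Critical d e → lam e = 0) ∧
        (c - ∑ e : ι, lam e • z e) ∈ LinearMap.range d := by
  have hpoly' : ∀ g f, IsFace d g f → IsUnit (d (Finsupp.single g 1) f) := fun g f hf =>
    Int.isUnit_iff.2 ((hpoly g f).imp_right (·.resolve_right hf))
  have hz' : IsMaxCycleFamily d z :=
    ⟨fun e he => (hz e he).1, fun e he => Int.isUnit_iff.2 (hz e he).2.1,
      fun e he => (hz e he).2.2.1⟩
  intro c hc
  obtain ⟨lam, hlam, hmem⟩ := exists_sum_smul_sub_mem_range hdd hpoly' hz' hc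
  refine ⟨lam, ⟨hlam, hmem⟩, fun lam' ⟨hlam', hmem'⟩ => ?_⟩
  have hdiff : ∑ e, (lam' - lam) e • z e =
      (c - ∑ e, lam e • z e) - (c - ∑ e, lam' e • z e) := by
    simp only [Pi.sub_apply, sub_smul, sum_sub_distrib]
    abel
  have hzero := eq_zero_of_sum_smul_mem_range hdd hpoly' hz' (μ := lam' - lam)
    (fun e he => by rw [Pi.sub_apply, hlam e he, hlam' e he, sub_zero])
    (hdiff ▸ sub_mem hmem hmem')
  exact sub_eq_zero.1 hzero

/-- if for each critical cell `e` there is a cycle `z e` in which `e` appears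
with coefficient `±1` and is the greatest cell appearing with nonzero coefficient, then
the classes of the `z e` form a ℤ-basis of homology: every cycle is, uniquely up to
boundaries, a ℤ-linear combination of the `z e`. -/
theorem discrete_morse_max_basis {ι : Type} [Fintype ι] [LinearOrder ι]
    (deg : ι → ℕ) (d : (ι →₀ ℤ) →ₗ[ℤ] (ι →₀ ℤ))
    (hdd : ∀ c, d (d c) = 0)
    (hdeg : ∀ e i, d (Finsupp.single e 1) i ≠ 0 → deg i + 1 = deg e)
    (hpoly : ∀ e i, d (Finsupp.single e 1) i = 1 ∨ d (Finsupp.single e 1) i = -1 ∨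
      d (Finsupp.single e 1) i = 0)
    (z : ι → (ι →₀ ℤ))
    (hz : ∀ e, Critical d e →
      d (z e) = 0 ∧ (z e e = 1 ∨ z e e = -1) ∧ (∀ i, z e i ≠ 0 → i ≤ e) ∧
        ∀ i, z e i ≠ 0 → deg i = deg e) :
    ∀ c : ι →₀ ℤ, d c = 0 →
      ∃! lam : ι → ℤ, (∀ e, ¬ Critical d e → lam e = 0) ∧
        (c - ∑ e : ι, lam e • z e) ∈ LinearMap.range d :=
  discrete_morse_max_basis_general deg d hdd hpoly z hz
end

section
/- The zonotope Z(n) = P(n) ∩ {x_{n−1} = x_n}, where P(n) ⊂ ℝⁿ is the standard permutohedron (the Minkowski sum of the segments [eᵢ,eⱼ] for 1 ≤ i < j ≤ n), is combinatorially equivalent to the permutohedron P(n−1); in particular Z(n) equals the zonotope generated by the segments [eᵢ,eⱼ] for 1 ≤ i < j ≤ n−2 together with the segments from e_{n−1}+e_n to 2eᵢ for 1 ≤ i ≤ n−2. -/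
/-- The standard basis vector `eᵢ` of `ℝⁿ`. -/
def stdVec {n : ℕ} (i : Fin n) : Fin n → ℝ := fun j => if j = i then 1 else 0

/-- The standard permutohedron `P(n) ⊂ ℝⁿ`: the zonotope which is the Minkowski sum of the
segments connecting `eᵢ` and `eⱼ` over all pairs `i < j`. -/
def permutohedron (n : ℕ) : Set (Fin n → ℝ) :=
  {x | ∃ a : Fin n → Fin n → ℝ, (∀ i j : Fin n, 0 ≤ a i j ∧ a i j ≤ 1) ∧
    x = ∑ i : Fin n, ∑ j : Fin n,
      if i < j then a i j • stdVec i + (1 - a i j) • stdVec j else 0}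

lemma stdVec_apply {n : ℕ} (i k : Fin n) : stdVec i k = if k = i then 1 else 0 := rfl

lemma sum_decomp {n : ℕ} (hn : 2 ≤ n) (p q : Fin n) (hp : (p : ℕ) = n - 2)
    (hq : (q : ℕ) = n - 1) {M : Type*} [AddCommMonoid M] (V : Fin n → Fin n → M) :
    ∑ i : Fin n, ∑ j : Fin n, (if i < j then V i j else 0) =
      (∑ i : Fin n, ∑ j : Fin n, (if i < j ∧ (j : ℕ) < n - 2 then V i j else 0)) +
      (∑ i : Fin n, (if (i : ℕ) < n - 2 then V i p + V i q else 0)) + V p q := by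
  have h1 : ∀ i : Fin n, (∑ j : Fin n, if i < j then V i j else 0) =
      (∑ j : Fin n, if i < j ∧ (j : ℕ) < n - 2 then V i j else 0) +
      ((if i < p then V i p else 0) + (if i < q then V i q else 0)) := by
    intro i
    have : (∑ j : Fin n, if i < j then V i j else 0) =
        ∑ j : Fin n, ((if i < j ∧ (j : ℕ) < n - 2 then V i j else 0) +
          ((if j = p then (if i < j then V i j else 0) else 0) +
           (if j = q then (if i < j then V i j else 0) else 0))) := by
      refine Finset.sum_congr rfl fun j _ => ?_
      by_cases hj1 : (j : ℕ) < n - 2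
      · have hjp : j ≠ p := by simp [Fin.ext_iff]; omega
        have hjq : j ≠ q := by simp [Fin.ext_iff]; omega
        simp [hj1, hjp, hjq]
      · by_cases hjp : j = p
        · have hpq : p ≠ q := by simp [Fin.ext_iff]; omega
          have hp2 : ¬ ((p : ℕ) < n - 2) := by omega
          simp [hjp, hp2, hpq]
        · have hjq : j = q := by
            have := j.isLt
            simp only [Fin.ext_iff] at hjp ⊢
            omega
          have hqp : q ≠ p := by simp [Fin.ext_iff]; omega
          have hq2 : ¬ ((q : ℕ) < n - 2) := by omega
          simp [hjq, hq2, hqp]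
    rw [this, Finset.sum_add_distrib, Finset.sum_add_distrib,
      Finset.sum_ite_eq' Finset.univ p, Finset.sum_ite_eq' Finset.univ q]
    simp
  calc ∑ i : Fin n, ∑ j : Fin n, (if i < j then V i j else 0)
      = ∑ i : Fin n, ((∑ j : Fin n, if i < j ∧ (j : ℕ) < n - 2 then V i j else 0) +
          ((if i < p then V i p else 0) + (if i < q then V i q else 0))) :=
        Finset.sum_congr rfl fun i _ => h1 i
    _ = (∑ i : Fin n, ∑ j : Fin n, (if i < j ∧ (j : ℕ) < n - 2 then V i j else 0)) +
        ((∑ i : Fin n, if i < p then V i p else 0) +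
         (∑ i : Fin n, if i < q then V i q else 0)) := by
        rw [Finset.sum_add_distrib, Finset.sum_add_distrib]
    _ = (∑ i : Fin n, ∑ j : Fin n, (if i < j ∧ (j : ℕ) < n - 2 then V i j else 0)) +
      (∑ i : Fin n, (if (i : ℕ) < n - 2 then V i p + V i q else 0)) + V p q := by
        have h2 : (∑ i : Fin n, if i < p then V i p else 0) =
            ∑ i : Fin n, (if (i : ℕ) < n - 2 then V i p else 0) := by
          refine Finset.sum_congr rfl fun i _ => ?_
          have : i < p ↔ (i : ℕ) < n - 2 := by rw [Fin.lt_def, hp]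
          simp [this]
        have h3 : (∑ i : Fin n, if i < q then V i q else 0) =
            (∑ i : Fin n, (if (i : ℕ) < n - 2 then V i q else 0)) + V p q := by
          have : (∑ i : Fin n, if i < q then V i q else 0) =
              ∑ i : Fin n, ((if (i : ℕ) < n - 2 then V i q else 0) +
                (if i = p then V p q else 0)) := by
            refine Finset.sum_congr rfl fun i _ => ?_
            by_cases hi1 : (i : ℕ) < n - 2
            · have hiq : i < q := by rw [Fin.lt_def]; omega
              have hip : i ≠ p := by simp [Fin.ext_iff]; omega
              simp [hi1, hiq, hip]
            · by_cases hip : i = p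
              · have hpq' : p < q := by rw [Fin.lt_def]; omega
                have hp2 : ¬ ((p : ℕ) < n - 2) := by omega
                simp [hip, hp2, hpq']
              · have hiq : ¬ i < q := by
                  have := i.isLt
                  simp only [Fin.ext_iff] at hip
                  rw [Fin.lt_def]; omega
                simp [hi1, hiq, hip]
          rw [this, Finset.sum_add_distrib, Finset.sum_ite_eq' Finset.univ p]
          simp
        rw [h2, h3]
        have h4 : ∀ i : Fin n, ((if (i : ℕ) < n - 2 then V i p else 0) +
            (if (i : ℕ) < n - 2 then V i q else 0)) =
            (if (i : ℕ) < n - 2 then V i p + V i q else 0) := by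
          intro i; split <;> simp
        have h5 : (∑ i : Fin n, (if (i : ℕ) < n - 2 then V i p + V i q else 0)) =
            (∑ i : Fin n, (if (i : ℕ) < n - 2 then V i p else 0)) +
            (∑ i : Fin n, (if (i : ℕ) < n - 2 then V i q else 0)) := by
          rw [← Finset.sum_add_distrib]
          exact Finset.sum_congr rfl fun i _ => (h4 i).symm
        rw [h5]
        abel

lemma rhs_pq {n : ℕ} (hn : 2 ≤ n) (p q : Fin n) (hp : (p : ℕ) = n - 2)
    (hq : (q : ℕ) = n - 1) (b : Fin n → Fin n → ℝ) (t : Fin n → ℝ) (k : Fin n)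
    (hk : k = p ∨ k = q) :
    ((∑ i : Fin n, ∑ j : Fin n,
        if i < j ∧ (j : ℕ) < n - 2 then b i j • stdVec i + (1 - b i j) • stdVec j else 0) +
      (∑ i : Fin n,
        if (i : ℕ) < n - 2 then
          (1 - t i) • (stdVec p + stdVec q) + t i • ((2 : ℝ) • stdVec i) else 0) +
      (1 / 2 : ℝ) • (stdVec p + stdVec q)) k =
      (∑ i : Fin n, if (i : ℕ) < n - 2 then 1 - t i else 0) + 1 / 2 := by
  have hkp : ¬ ((k : ℕ) < n - 2) := by rcases hk with rfl | rfl <;> omega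
  have hpq : p ≠ q := by simp only [ne_eq, Fin.ext_iff]; omega
  have hqp : q ≠ p := by simp only [ne_eq, Fin.ext_iff]; omega
  have hS : (∑ i : Fin n, ∑ j : Fin n,
      if i < j ∧ (j : ℕ) < n - 2 then b i j • stdVec i + (1 - b i j) • stdVec j
      else 0) k = 0 := by
    simp only [Finset.sum_apply]
    refine Finset.sum_eq_zero fun i _ => Finset.sum_eq_zero fun j _ => ?_
    rw [apply_ite (fun f : Fin n → ℝ => f k)]
    split
    · next h =>
      obtain ⟨h1, h2⟩ := h
      rw [Fin.lt_def] at h1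
      have hki : k ≠ i := by simp only [ne_eq, Fin.ext_iff]; omega
      have hkj : k ≠ j := by simp only [ne_eq, Fin.ext_iff]; omega
      simp [stdVec_apply, hki, hkj]
    · simp
  have hM : (∑ i : Fin n,
      if (i : ℕ) < n - 2 then
        (1 - t i) • (stdVec p + stdVec q) + t i • ((2 : ℝ) • stdVec i) else 0) k =
      ∑ i : Fin n, (if (i : ℕ) < n - 2 then 1 - t i else 0) := by
    simp only [Finset.sum_apply]
    refine Finset.sum_congr rfl fun i _ => ?_
    rw [apply_ite (fun f : Fin n → ℝ => f k)]
    split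
    · next h =>
      have hki : k ≠ i := by simp only [ne_eq, Fin.ext_iff]; omega
      rcases hk with rfl | rfl
      · simp [stdVec_apply, hki, hpq]
      · simp [stdVec_apply, hki, hqp]
    · simp
  have hC : ((1 / 2 : ℝ) • (stdVec p + stdVec q)) k = 1 / 2 := by
    rcases hk with rfl | rfl
    · simp [stdVec_apply, hpq]
    · simp [stdVec_apply, hqp]
  rw [Pi.add_apply, Pi.add_apply, hS, hM, hC, zero_add]

lemma pair_split {n : ℕ} (p q i : Fin n) (u v : ℝ) :
    (u • stdVec i + (1 - u) • stdVec p) + (v • stdVec i + (1 - v) • stdVec q) =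
      ((1 - (u + v) / 2) • (stdVec p + stdVec q) + ((u + v) / 2) • ((2 : ℝ) • stdVec i)) +
        ((v - u) / 2) • (stdVec p - stdVec q) := by
  module

lemma pq_split {n : ℕ} (p q : Fin n) (w : ℝ) :
    w • stdVec p + (1 - w) • stdVec q =
      (1 / 2 : ℝ) • (stdVec p + stdVec q) + (w - 1 / 2) • (stdVec p - stdVec q) := by
  module

lemma pair_same {n : ℕ} (p q i : Fin n) (u : ℝ) :
    (u • stdVec i + (1 - u) • stdVec p) + (u • stdVec i + (1 - u) • stdVec q) =
      (1 - u) • (stdVec p + stdVec q) + u • ((2 : ℝ) • stdVec i) := by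
  module

lemma pq_half {n : ℕ} (p q : Fin n) :
    (1 / 2 : ℝ) • stdVec p + (1 - 1 / 2 : ℝ) • stdVec q =
      (1 / 2 : ℝ) • (stdVec p + stdVec q) := by
  module

/-- `Z(n) = P(n) ∩ {x_{n−1} = x_n}` equals the zonotope generated by the
segments `[eᵢ, eⱼ]` for `i < j ≤ n−2` together with the segments from `e_{n−1}+e_n` to
`2eᵢ` for `i ≤ n−2` (translated by the constant `(e_{n−1}+e_n)/2` contributed by the pair
`(n−1, n)`); in particular `Z(n)` is combinatorially equivalent to the permutohedron
`P(n−1)`.  (Indices below are 0-based: the last two coordinates are `⟨n−2⟩` and `⟨n−1⟩`.) -/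
theorem permutohedron_cap_hyperplane_eq_zonotope (n : ℕ) (hn : 2 ≤ n) :
    permutohedron n ∩
        {x | x ⟨n - 2, by omega⟩ = x ⟨n - 1, by omega⟩} =
      {x | ∃ (a : Fin n → Fin n → ℝ) (t : Fin n → ℝ),
        (∀ i j : Fin n, 0 ≤ a i j ∧ a i j ≤ 1) ∧ (∀ i : Fin n, 0 ≤ t i ∧ t i ≤ 1) ∧
        x = (∑ i : Fin n, ∑ j : Fin n,
              if i < j ∧ (j : ℕ) < n - 2 then
                a i j • stdVec i + (1 - a i j) • stdVec j
              else 0) +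
            (∑ i : Fin n,
              if (i : ℕ) < n - 2 then
                (1 - t i) • (stdVec (⟨n - 2, by omega⟩ : Fin n) +
                    stdVec (⟨n - 1, by omega⟩ : Fin n)) +
                  t i • ((2 : ℝ) • stdVec i)
              else 0) +
            (1 / 2 : ℝ) • (stdVec (⟨n - 2, by omega⟩ : Fin n) +
              stdVec (⟨n - 1, by omega⟩ : Fin n))} := by
  have h2 : n - 2 < n := by omega
  have h1 : n - 1 < n := by omega
  set p : Fin n := ⟨n - 2, h2⟩ with hpdef
  set q : Fin n := ⟨n - 1, h1⟩ with hqdef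
  have hp : (p : ℕ) = n - 2 := rfl
  have hq : (q : ℕ) = n - 1 := rfl
  ext x
  simp only [Set.mem_inter_iff, Set.mem_setOf_eq]
  constructor
  · rintro ⟨⟨a, ha, rfl⟩, hc⟩
    refine ⟨a, fun i => (a i p + a i q) / 2, ha, ?_, ?_⟩
    · intro i
      constructor
      · have := (ha i p).1; have := (ha i q).1; linarith
      · have := (ha i p).2; have := (ha i q).2; linarith
    · have hdec := sum_decomp hn p q hp hq
        (fun i j => a i j • stdVec i + (1 - a i j) • stdVec j)
      have hpq : p ≠ q := by simp only [ne_eq, Fin.ext_iff]; omega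
      have hqp : q ≠ p := by simp only [ne_eq, Fin.ext_iff]; omega
      set c1 : ℝ := ∑ i : Fin n, (if (i : ℕ) < n - 2 then (a i q - a i p) / 2 else 0)
        with hc1
      have hM : (∑ i : Fin n, (if (i : ℕ) < n - 2 then
          (a i p • stdVec i + (1 - a i p) • stdVec p) +
          (a i q • stdVec i + (1 - a i q) • stdVec q) else 0)) =
          (∑ i : Fin n, if (i : ℕ) < n - 2 then
              (1 - (a i p + a i q) / 2) • (stdVec p + stdVec q) +
                ((a i p + a i q) / 2) • ((2 : ℝ) • stdVec i) else 0) +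
          c1 • (stdVec p - stdVec q) := by
        rw [hc1, Finset.sum_smul, ← Finset.sum_add_distrib]
        refine Finset.sum_congr rfl fun i _ => ?_
        by_cases h : (i : ℕ) < n - 2
        · simp only [if_pos h]
          exact pair_split p q i (a i p) (a i q)
        · simp [h]
      have key : (∑ i : Fin n, ∑ j : Fin n,
          if i < j then a i j • stdVec i + (1 - a i j) • stdVec j else 0) =
          ((∑ i : Fin n, ∑ j : Fin n,
              if i < j ∧ (j : ℕ) < n - 2 then a i j • stdVec i + (1 - a i j) • stdVec j
              else 0) +
            (∑ i : Fin n, if (i : ℕ) < n - 2 then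
                (1 - (a i p + a i q) / 2) • (stdVec p + stdVec q) +
                  ((a i p + a i q) / 2) • ((2 : ℝ) • stdVec i) else 0) +
            (1 / 2 : ℝ) • (stdVec p + stdVec q)) +
          (c1 + (a p q - 1 / 2)) • (stdVec p - stdVec q) := by
        rw [hdec, hM, pq_split p q (a p q), add_smul]
        abel
      have hEpq := rhs_pq hn p q hp hq a (fun i => (a i p + a i q) / 2)
      have e1 := congrFun key p
      have e2 := congrFun key q
      have hDp : (stdVec p - stdVec q) p = 1 := by simp [stdVec_apply, hpq]
      have hDq : (stdVec p - stdVec q) q = -1 := by simp [stdVec_apply, hqp]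
      simp only [Pi.add_apply, Pi.smul_apply, smul_eq_mul, hDp, hDq] at e1 e2
      have hc0 : c1 + (a p q - 1 / 2) = 0 := by
        have hP := hEpq p (Or.inl rfl)
        have hQ := hEpq q (Or.inr rfl)
        simp only [Pi.add_apply, Pi.smul_apply, smul_eq_mul] at hP hQ
        rw [e1, e2] at hc
        linarith [hP, hQ]
      rw [key, hc0, zero_smul, add_zero]
  · rintro ⟨b, t, hb, ht, rfl⟩
    constructor
    · classical
      refine ⟨fun i j => if (j : ℕ) < n - 2 then b i j else
          if (i : ℕ) < n - 2 then t i else 1 / 2, ?_, ?_⟩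
      · intro i j
        dsimp only
        split_ifs
        · exact hb i j
        · exact ht i
        · norm_num
      · rw [sum_decomp hn p q hp hq]
        have hp2 : ¬ ((p : ℕ) < n - 2) := by omega
        have hq2 : ¬ ((q : ℕ) < n - 2) := by omega
        have e1 : (∑ i : Fin n, ∑ j : Fin n,
            if i < j ∧ (j : ℕ) < n - 2 then
              (if (j : ℕ) < n - 2 then b i j else
                if (i : ℕ) < n - 2 then t i else 1 / 2) • stdVec i +
              (1 - (if (j : ℕ) < n - 2 then b i j else
                if (i : ℕ) < n - 2 then t i else 1 / 2)) • stdVec j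
            else 0) =
            ∑ i : Fin n, ∑ j : Fin n,
            if i < j ∧ (j : ℕ) < n - 2 then b i j • stdVec i + (1 - b i j) • stdVec j
            else 0 := by
          refine Finset.sum_congr rfl fun i _ => Finset.sum_congr rfl fun j _ => ?_
          by_cases h : i < j ∧ (j : ℕ) < n - 2
          · simp only [if_pos h, if_pos h.2]
          · simp only [if_neg h]
        have e2 : (∑ i : Fin n, if (i : ℕ) < n - 2 then
            ((if (p : ℕ) < n - 2 then b i p else
                if (i : ℕ) < n - 2 then t i else 1 / 2) • stdVec i +
              (1 - (if (p : ℕ) < n - 2 then b i p else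
                if (i : ℕ) < n - 2 then t i else 1 / 2)) • stdVec p) +
            ((if (q : ℕ) < n - 2 then b i q else
                if (i : ℕ) < n - 2 then t i else 1 / 2) • stdVec i +
              (1 - (if (q : ℕ) < n - 2 then b i q else
                if (i : ℕ) < n - 2 then t i else 1 / 2)) • stdVec q)
            else 0) =
            ∑ i : Fin n, if (i : ℕ) < n - 2 then
              (1 - t i) • (stdVec p + stdVec q) + t i • ((2 : ℝ) • stdVec i) else 0 := by
          refine Finset.sum_congr rfl fun i _ => ?_
          by_cases h : (i : ℕ) < n - 2
          · rw [if_neg hp2, if_neg hq2]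
            simp only [if_pos h]
            exact pair_same p q i (t i)
          · simp only [if_neg h]
        rw [e1, e2]
        beta_reduce
        rw [if_neg hq2, if_neg hp2, pq_half p q]

    · rw [rhs_pq hn p q hp hq b t p (Or.inl rfl), rhs_pq hn p q hp hq b t q (Or.inr rfl)]
end

section
/- In the unordered complex ucel(n), the coefficient of the face ∘^k | ∘^{n−k} in the boundary of the cell ∘^n is: 0 if k and n−k are both odd; C(n′,k′) if n = 2n′ and k = 2k′; C(n′,k′) if n = 2n′+1 and k = 2k′; and −C(n′,k′) if n = 2n′+1 and k = 2k′+1. -/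
open Finset

/-- The coefficient of the face `∘^k | ∘^{n−k}` in the boundary of the cell `∘^n` in
`ucel(n)`: the signed sum over all `k`-subsets `s` of `{0,…,n−1}` (the entries going to the
first block, relative orders preserved) of `(−1)^k` times the sign of the corresponding
permutation, whose number of inversions is the number of pairs `(x ∈ s, y ∉ s)` with
`y < x`. -/
def ucelCoeff (n k : ℕ) : ℤ :=
  ∑ s ∈ (Finset.range n).powersetCard k,
    (-1) ^ k * (-1) ^ (∑ x ∈ s, ((Finset.range x).filter (fun y => y ∉ s)).card)

noncomputable def Finv (s : Finset ℕ) : ℕ :=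
  ∑ x ∈ s, ((Finset.range x).filter (fun y => y ∉ s)).card

noncomputable def F (n k : ℕ) : ℤ :=
  ∑ s ∈ (Finset.range n).powersetCard k, (-1) ^ Finv s

lemma F_zero (n : ℕ) : F n 0 = 1 := by
  simp [F, Finv]

lemma Finv_insert {n k : ℕ} {s : Finset ℕ} (hs : s ⊆ Finset.range n) (hc : s.card = k) :
    Finv (insert n s) = (n - k) + Finv s := by
  have hns : n ∉ s := fun h => by simpa using hs h
  rw [Finv, Finset.sum_insert hns]
  congr 1
  · have h1 : (Finset.range n).filter (fun y => y ∉ insert n s) = Finset.range n \ s := by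
      ext y
      simp only [mem_filter, mem_range, mem_insert, mem_sdiff, not_or]
      constructor
      · rintro ⟨hy, _, h2⟩; exact ⟨hy, h2⟩
      · rintro ⟨hy, h2⟩; exact ⟨hy, by omega, h2⟩
    rw [h1, Finset.card_sdiff_of_subset hs, Finset.card_range, hc]
  · rw [Finv]
    apply Finset.sum_congr rfl
    intro x hx
    congr 1
    ext y
    have hxn : x < n := by simpa using hs hx
    simp only [mem_filter, mem_range, mem_insert, not_or]
    constructor
    · rintro ⟨hy, _, h2⟩; exact ⟨hy, h2⟩
    · rintro ⟨hy, h2⟩; exact ⟨hy, by omega, h2⟩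

lemma F_rec (n k : ℕ) : F (n+1) (k+1) = F n (k+1) + (-1)^(n-k) * F n k := by
  have hn : n ∉ Finset.range n := by simp
  rw [F, Finset.range_add_one, powersetCard_succ_insert hn, Finset.sum_union]
  · congr 1
    have hinj : ∀ a ∈ (Finset.range n).powersetCard k, ∀ b ∈ (Finset.range n).powersetCard k,
        insert n a = insert n b → a = b := by
      intro a ha b hb hab
      rw [Finset.mem_powersetCard] at ha hb
      have hna : n ∉ a := fun h => by simpa using ha.1 h
      have hnb : n ∉ b := fun h => by simpa using hb.1 h
      rw [← Finset.erase_insert hna, ← Finset.erase_insert hnb, hab]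
    rw [Finset.sum_image hinj, F, Finset.mul_sum]
    apply Finset.sum_congr rfl
    intro s hs
    rw [Finset.mem_powersetCard] at hs
    rw [Finv_insert hs.1 hs.2, pow_add]
  · rw [Finset.disjoint_right]
    intro s hs hs'
    simp only [Finset.mem_image] at hs
    obtain ⟨t, _, rfl⟩ := hs
    rw [Finset.mem_powersetCard] at hs'
    have := hs'.1 (Finset.mem_insert_self n t)
    simpa using this

lemma F_big {n k : ℕ} (h : n < k) : F n k = 0 := by
  rw [F, Finset.powersetCard_eq_empty.mpr (by simpa using h), Finset.sum_empty]

lemma g_zero {n k : ℕ} (h : n < k) :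
    (if Even n ∧ Odd k then (0:ℤ) else ((n/2).choose (k/2) : ℤ)) = 0 := by
  split
  · rfl
  · rename_i hc
    rw [Nat.even_iff, Nat.odd_iff] at hc
    have h2 : n/2 < k/2 := by omega
    rw [Nat.choose_eq_zero_of_lt h2]
    simp

lemma F_eq (n k : ℕ) : F n k = if Even n ∧ Odd k then 0 else ((n/2).choose (k/2) : ℤ) := by
  induction n generalizing k with
  | zero =>
    cases k with
    | zero => simpa using F_zero 0
    | succ k => rw [F_big (by omega), g_zero (by omega)]
  | succ n ih =>
    cases k with
    | zero =>
      rw [F_zero, if_neg (by simp)]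
      simp
    | succ k =>
      by_cases hkn : k ≤ n
      · rw [F_rec, ih, ih]
        rcases Nat.mod_two_eq_zero_or_one n with hn | hn <;>
          rcases Nat.mod_two_eq_zero_or_one k with hk | hk
        · rw [if_neg (show ¬(Even (n+1) ∧ Odd (k+1)) by
                rw [Nat.even_iff, Nat.odd_iff]; omega),
              if_pos (show Even n ∧ Odd (k+1) from
                ⟨Nat.even_iff.mpr hn, Nat.odd_iff.mpr (by omega)⟩),
              if_neg (show ¬(Even n ∧ Odd k) by rw [Nat.even_iff, Nat.odd_iff]; omega)]
          have e1 : (n+1)/2 = n/2 := by omega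
          have e2 : (k+1)/2 = k/2 := by omega
          have e3 : (-1:ℤ)^(n-k) = 1 := Even.neg_one_pow ⟨(n-k)/2, by omega⟩
          rw [e1, e2, e3]; ring
        · rw [if_neg (show ¬(Even (n+1) ∧ Odd (k+1)) by
                rw [Nat.even_iff, Nat.odd_iff]; omega),
              if_neg (show ¬(Even n ∧ Odd (k+1)) by rw [Nat.even_iff, Nat.odd_iff]; omega),
              if_pos (show Even n ∧ Odd k from ⟨Nat.even_iff.mpr hn, Nat.odd_iff.mpr hk⟩)]
          have e1 : (n+1)/2 = n/2 := by omega
          rw [e1]; ring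
        · rw [if_pos (show Even (n+1) ∧ Odd (k+1) from
                ⟨Nat.even_iff.mpr (by omega), Nat.odd_iff.mpr (by omega)⟩),
              if_neg (show ¬(Even n ∧ Odd (k+1)) by rw [Nat.even_iff, Nat.odd_iff]; omega),
              if_neg (show ¬(Even n ∧ Odd k) by rw [Nat.even_iff, Nat.odd_iff]; omega)]
          have e2 : (k+1)/2 = k/2 := by omega
          have e3 : (-1:ℤ)^(n-k) = -1 := Odd.neg_one_pow ⟨(n-k-1)/2, by omega⟩
          rw [e2, e3]; ring
        · rw [if_neg (show ¬(Even (n+1) ∧ Odd (k+1)) by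
                rw [Nat.even_iff, Nat.odd_iff]; omega),
              if_neg (show ¬(Even n ∧ Odd (k+1)) by rw [Nat.even_iff, Nat.odd_iff]; omega),
              if_neg (show ¬(Even n ∧ Odd k) by rw [Nat.even_iff, Nat.odd_iff]; omega)]
          have e1 : (n+1)/2 = n/2 + 1 := by omega
          have e2 : (k+1)/2 = k/2 + 1 := by omega
          have e3 : (-1:ℤ)^(n-k) = 1 := Even.neg_one_pow ⟨(n-k)/2, by omega⟩
          rw [e1, e2, e3, Nat.choose_succ_succ]
          push_cast; ring
      · rw [F_big (by omega), g_zero (by omega)]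

lemma ucel_eq (n k : ℕ) : ucelCoeff n k = (-1)^k * F n k := by
  rw [ucelCoeff, F, Finset.mul_sum]
  simp only [Finv]

/-- the coefficient of `∘^k | ∘^{n−k}` in `∂(∘^n)` is `0` if `k` and `n−k`
are both odd, `C(n′,k′)` if `n = 2n′` and `k = 2k′`, `C(n′,k′)` if `n = 2n′+1` and
`k = 2k′`, and `−C(n′,k′)` if `n = 2n′+1` and `k = 2k′+1`. -/
theorem ucel_boundary_coefficient (n k : ℕ) (hk : k ≤ n) :
    (Odd k → Odd (n - k) → ucelCoeff n k = 0) ∧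
    (∀ n' k' : ℕ, n = 2 * n' → k = 2 * k' → ucelCoeff n k = (n'.choose k' : ℤ)) ∧
    (∀ n' k' : ℕ, n = 2 * n' + 1 → k = 2 * k' → ucelCoeff n k = (n'.choose k' : ℤ)) ∧
    (∀ n' k' : ℕ, n = 2 * n' + 1 → k = 2 * k' + 1 → ucelCoeff n k = -(n'.choose k' : ℤ)) := by
  refine ⟨?_, ?_, ?_, ?_⟩
  · intro h1 h2
    rw [Nat.odd_iff] at h1 h2
    rw [ucel_eq, F_eq,
      if_pos (show Even n ∧ Odd k from ⟨Nat.even_iff.mpr (by omega), Nat.odd_iff.mpr h1⟩)]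
    ring
  · rintro n' k' rfl rfl
    rw [ucel_eq, F_eq, if_neg (show ¬(Even (2*n') ∧ Odd (2*k')) by
      rw [Nat.even_iff, Nat.odd_iff]; omega)]
    have e1 : 2*n'/2 = n' := by omega
    have e2 : 2*k'/2 = k' := by omega
    have e3 : (-1:ℤ)^(2*k') = 1 := Even.neg_one_pow ⟨k', by omega⟩
    rw [e1, e2, e3, one_mul]
  · rintro n' k' rfl rfl
    rw [ucel_eq, F_eq, if_neg (show ¬(Even (2*n'+1) ∧ Odd (2*k')) by
      rw [Nat.even_iff, Nat.odd_iff]; omega)]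
    have e1 : (2*n'+1)/2 = n' := by omega
    have e2 : 2*k'/2 = k' := by omega
    have e3 : (-1:ℤ)^(2*k') = 1 := Even.neg_one_pow ⟨k', by omega⟩
    rw [e1, e2, e3, one_mul]
  · rintro n' k' rfl rfl
    rw [ucel_eq, F_eq, if_neg (show ¬(Even (2*n'+1) ∧ Odd (2*k'+1)) by
      rw [Nat.even_iff, Nat.odd_iff]; omega)]
    have e1 : (2*n'+1)/2 = n' := by omega
    have e2 : (2*k'+1)/2 = k' := by omega
    have e3 : (-1:ℤ)^(2*k'+1) = -1 := Odd.neg_one_pow ⟨k', by omega⟩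
    rw [e1, e2, e3]; ring
end
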